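/- Let m: I → ℝ be a continuous non-decreasing surjection from an open interval I, let θ(h) > 0, and let f, h: I → I-maps with m(h(x)) = m(x) + θ(h) for all x. Define f̂ on the image of m by f̂(m(x)) = m(f(x)) (assumed well-defined), and φ(z) = f̂(z) − z. Suppose φ is strictly increasing on [0, ϑ). If w satisfies f(w) = h f h⁻¹(w) with μ = m(w) ∈ (θ(h), ϑ), then φ(μ) = φ(μ − θ(h)), contradicting strict monotonicity; hence no such w exists. -/

import Mathlib

open Set

theorem apply_inv_eq_sub_of_translation {I : Set ℝ} {m h hinv : ℝ → ℝ} {θ : ℝ}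
    (hhinvI : MapsTo hinv I I) (hinvl : ∀ x ∈ I, h (hinv x) = x)
    (htrans : ∀ x ∈ I, m (h x) = m x + θ) {w : ℝ} (hw : w ∈ I) :
    m (hinv w) = m w - θ := by
  have := htrans (hinv w) (hhinvI hw)
  rw [hinvl w hw] at this
  linarith

theorem stmt_14_general (I : Set ℝ)
    (m : ℝ → ℝ)
    (f h hinv : ℝ → ℝ)
    (hfI : Set.MapsTo f I I) (hhinvI : Set.MapsTo hinv I I)
    (hinvl : ∀ x ∈ I, h (hinv x) = x)
    (θh ϑ : ℝ) (hθpos : 0 < θh)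
    (htrans : ∀ x ∈ I, m (h x) = m x + θh)
    (fhat : ℝ → ℝ)
    (hfhat : ∀ x ∈ I, m x ∈ Set.Ico 0 ϑ → fhat (m x) = m (f x))
    (hφ : StrictMonoOn (fun z => fhat z - z) (Set.Ico 0 ϑ)) :
    ¬ ∃ w ∈ I, f w = h (f (hinv w)) ∧ m w ∈ Set.Ioo θh ϑ := by
  rintro ⟨w, hwI, hconj, hμθ, hμϑ⟩
  have hvI : hinv w ∈ I := hhinvI hwI
  have hmv : m (hinv w) = m w - θh := apply_inv_eq_sub_of_translation hhinvI hinvl htrans hwI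
  have hw : m w ∈ Ico 0 ϑ := ⟨by linarith, hμϑ⟩
  have hv : m (hinv w) ∈ Ico 0 ϑ := ⟨by linarith, by linarith⟩
  have hshift : fhat (m w) = fhat (m (hinv w)) + θh := by
    rw [hfhat w hwI hw, hfhat _ hvI hv, hconj, htrans _ (hfI hvI)]
  have hφeq : fhat (m w) - m w = fhat (m (hinv w)) - m (hinv w) := by linarith
  have hμeq : m w = m (hinv w) := hφ.injOn hw hv hφeq
  linarith

/-- Strict monotonicity of `φ(z) = f̂(z) - z` forbids a point `w` with
`f(w) = h f h⁻¹(w)` and `m(w) ∈ (θ(h), ϑ)`. -/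
theorem stmt_14 (I : Set ℝ) (hIopen : IsOpen I) (hIconn : IsPreconnected I)
    (m : ℝ → ℝ) (hmc : ContinuousOn m I)
    (hmono : ∀ x ∈ I, ∀ y ∈ I, x ≤ y → m x ≤ m y)
    (hsurj : m '' I = Set.univ)
    (f h hinv : ℝ → ℝ)
    (hfI : Set.MapsTo f I I) (hhI : Set.MapsTo h I I) (hhinvI : Set.MapsTo hinv I I)
    (hinvl : ∀ x ∈ I, h (hinv x) = x)
    (θh ϑ : ℝ) (hθpos : 0 < θh)
    (htrans : ∀ x ∈ I, m (h x) = m x + θh)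
    (fhat : ℝ → ℝ)
    (hfhat : ∀ x ∈ I, m x ∈ Set.Ico 0 ϑ → fhat (m x) = m (f x))
    (hφ : StrictMonoOn (fun z => fhat z - z) (Set.Ico 0 ϑ)) :
    ¬ ∃ w ∈ I, f w = h (f (hinv w)) ∧ m w ∈ Set.Ioo θh ϑ :=
  stmt_14_general I m f h hinv hfI hhinvI hinvl θh ϑ hθpos htrans fhat hfhat hφ
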